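/- arXiv:1906.06157 — 4 statements merged into one kernel-verified Lean document; each statement's English description precedes it below -/
import Mathlib

section
/- For every k > 1 and every n ≥ 1, the (k-1,n)-prefer-max sequence is a suffix of the (k,n)-prefer-max sequence. That is, if (w_i)_{i=0}^{k^n-1} is the sequence of windows of the (k,n)-prefer-max cycle and (v_i)_{i=0}^{(k-1)^n-1} is the sequence of windows of the (k-1,n)-prefer-max cycle, then for every i with 0 ≤ i < (k-1)^n one has w_{(k^n-(k-1)^n)+i} = v_i. -/
/-- `preferMaxAux k n i` is the list of windows `[wᵢ, wᵢ₋₁, ..., w₀]` of the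
`(k,n)`-prefer-max cycle, newest first.  The first window is `w₀ = 0^{n-1}(k-1)` and,
if `wᵢ = σx`, then `wᵢ₊₁ = xτ` where `τ` is the maximal symbol in `[k] = {0,…,k-1}`
such that `xτ` has not appeared among `w₀,…,wᵢ` (computed via `Nat.findGreatest`,
which returns `0` if no such symbol exists; the existence of such a symbol at each
step is part of the correctness of the construction). -/
def preferMaxAux (k n : ℕ) : ℕ → List (List ℕ)
  | 0 => [List.replicate (n - 1) 0 ++ [k - 1]]
  | i + 1 =>
    let prev := preferMaxAux k n i
    let w := prev.headI
    (w.tail ++ [Nat.findGreatest (fun τ => (w.tail ++ [τ]) ∉ prev) (k - 1)]) :: prev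

/-- `preferMax k n i` is the `i`-th window `wᵢ` of the `(k,n)`-prefer-max cycle. -/
def preferMax (k n i : ℕ) : List ℕ := (preferMaxAux k n i).headI

/-!
Words of length `n` over `[k]` are the edges of the de Bruijn graph on words of length `n - 1`,
and the prefer-max cycle is a greedy walk in it starting from the state `0^{n-1}`. Whenever the
walk is back at `0^{n-1}`, every state has as many used in-edges as used out-edges; since the
greedy rule uses the out-edges `z τ` of a state in decreasing order of `τ`, a used edge `z 0`
forces all `z τ`, hence all in-edges `σ z`, to be used. This shows that no window repeats before
all `k^n` windows occur, and that the `(k+1)`-walk first avoids the top symbol `k` right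
after using the `(k+1)^n - k^n` windows containing `k`, with the window `0^{n-1}(k-1) = v₀`.
From then on every edge `x k` is used, so the greedy choices over `[k+1]` and over `[k]`
coincide.
-/

open List

theorem Nat.findGreatest_congr {P Q : ℕ → Prop} [DecidablePred P] [DecidablePred Q]
    {b : ℕ} (h : ∀ m ≤ b, P m ↔ Q m) : Nat.findGreatest P b = Nat.findGreatest Q b := by
  rw [Nat.findGreatest_eq_iff]
  refine ⟨Nat.findGreatest_le b, fun h0 => ?_, fun m hm hmb hP => ?_⟩
  · exact (h _ (Nat.findGreatest_le b)).2 (Nat.findGreatest_of_ne_zero rfl h0)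
  · exact Nat.findGreatest_is_greatest hm hmb ((h m hmb).1 hP)

theorem List.countP_le_length_of_nodup {α : Type*} {l s : List α} {p : α → Bool}
    (hl : l.Nodup) (hp : ∀ a ∈ l, p a → a ∈ s) : l.countP p ≤ s.length := by
  rw [countP_eq_length_filter]
  exact ((hl.filter p).subperm fun a ha => hp a (mem_of_mem_filter ha)
    (by simpa using (mem_filter.1 ha).2)).length_le

theorem List.length_le_countP_iff_subset {α : Type*} {l s : List α} {p : α → Bool}
    (hl : l.Nodup) (hs : s.Nodup) (hp : ∀ a ∈ l, p a ↔ a ∈ s) :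
    s.length ≤ l.countP p ↔ s ⊆ l := by
  have hsub : l.filter p ⊆ s := fun a ha =>
    (hp a (mem_of_mem_filter ha)).1 (by simpa using (mem_filter.1 ha).2)
  rw [countP_eq_length_filter]
  constructor
  · intro hle a ha
    exact mem_of_mem_filter (((hl.filter p).subperm hsub).perm_of_length_le hle |>.symm.subset ha)
  · intro hsl
    refine (hs.subperm fun a ha => mem_filter.2 ⟨hsl ha, ?_⟩).length_le
    simpa using (hp a (hsl ha)).2 ha

theorem List.eq_cons_tail_of_mem_of_notMem_tail {α : Type*} {a : α} {u : List α} (h : a ∈ u)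
    (h' : a ∉ u.tail) :
    u = a :: u.tail := by
  cases u with
  | nil => simp at h
  | cons b u =>
    rcases mem_cons.1 h with rfl | h
    exacts [rfl, absurd h h']

namespace PreferMax

def nextSymbol (k : ℕ) (H : List (List ℕ)) : ℕ :=
  Nat.findGreatest (fun τ => H.headI.tail ++ [τ] ∉ H) (k - 1)

def greedyStep (k : ℕ) (H : List (List ℕ)) : List (List ℕ) :=
  (H.headI.tail ++ [nextSymbol k H]) :: H

variable {k n : ℕ}

theorem preferMaxAux_succ (k n t : ℕ) :
    preferMaxAux k n (t + 1) = greedyStep k (preferMaxAux k n t) := rfl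

theorem preferMax_succ (k n t : ℕ) :
    preferMax k n (t + 1) = (preferMax k n t).tail ++ [nextSymbol k (preferMaxAux k n t)] := rfl

theorem preferMax_zero (k n : ℕ) : preferMax k n 0 = replicate (n - 1) 0 ++ [k - 1] := rfl

theorem length_preferMaxAux (k n t : ℕ) : (preferMaxAux k n t).length = t + 1 := by
  induction t with
  | zero => rfl
  | succ t ih => simp [preferMaxAux_succ, greedyStep, ih]

theorem mem_preferMaxAux {t : ℕ} {u : List ℕ} :
    u ∈ preferMaxAux k n t ↔ ∃ s ≤ t, preferMax k n s = u := by
  induction t with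
  | zero => simp [preferMaxAux, preferMax, eq_comm]
  | succ t ih =>
    rw [preferMaxAux_succ, greedyStep, mem_cons, ih]
    change u = preferMax k n (t + 1) ∨ _ ↔ _
    constructor
    · rintro (rfl | ⟨s, hs, rfl⟩)
      exacts [⟨t + 1, le_rfl, rfl⟩, ⟨s, by omega, rfl⟩]
    · rintro ⟨s, hs, rfl⟩
      rcases Nat.lt_or_eq_of_le hs with hs | rfl
      exacts [Or.inr ⟨s, by omega, rfl⟩, Or.inl rfl]

theorem preferMax_mem_preferMaxAux {s t : ℕ} (h : s ≤ t) :
    preferMax k n s ∈ preferMaxAux k n t :=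
  mem_preferMaxAux.2 ⟨s, h, rfl⟩

theorem preferMaxAux_subset {s t : ℕ} (h : s ≤ t) :
    preferMaxAux k n s ⊆ preferMaxAux k n t := by
  intro u hu
  obtain ⟨r, hr, rfl⟩ := mem_preferMaxAux.1 hu
  exact preferMax_mem_preferMaxAux (hr.trans h)

theorem nextSymbol_le (k : ℕ) (H : List (List ℕ)) : nextSymbol k H ≤ k - 1 :=
  Nat.findGreatest_le _

def words (k n : ℕ) : Finset (List ℕ) :=
  Finset.univ.image fun f : Fin n → Fin k => List.ofFn fun i => (f i : ℕ)

theorem mem_words {u : List ℕ} : u ∈ words k n ↔ u.length = n ∧ ∀ c ∈ u, c < k := by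
  simp only [words, Finset.mem_image, Finset.mem_univ, true_and]
  constructor
  · rintro ⟨f, rfl⟩
    simp [mem_ofFn]
  · rintro ⟨rfl, hu⟩
    exact ⟨fun i => ⟨u[i], hu _ (getElem_mem _)⟩, ofFn_getElem⟩

theorem card_words (k n : ℕ) : (words k n).card = k ^ n := by
  rw [words, Finset.card_image_of_injective, Finset.card_univ, Fintype.card_fun,
    Fintype.card_fin, Fintype.card_fin]
  intro f g h
  funext i
  exact Fin.ext (congrFun (List.ofFn_injective h) i)

theorem preferMax_mem_words (hk : 0 < k) (hn : 0 < n) (t : ℕ) :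
    preferMax k n t ∈ words k n := by
  induction t with
  | zero =>
    have hl : (preferMax k n 0).length = n := by
      simp only [preferMax_zero, length_append, length_replicate, length_singleton]
      omega
    refine mem_words.2 ⟨hl, fun c hc => ?_⟩
    rw [preferMax_zero, mem_append, mem_replicate, mem_singleton] at hc
    omega
  | succ t ih =>
    obtain ⟨hl, hc⟩ := mem_words.1 ih
    have hl' : (preferMax k n (t + 1)).length = n := by
      simp only [preferMax_succ, length_append, length_tail, hl, length_singleton]
      omega
    refine mem_words.2 ⟨hl', fun c hc' => ?_⟩
    rw [preferMax_succ, mem_append, mem_singleton] at hc'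
    rcases hc' with hc' | rfl
    · exact hc c (mem_of_mem_tail hc')
    · have := nextSymbol_le k (preferMaxAux k n t)
      omega

theorem mem_words_of_mem_preferMaxAux (hk : 0 < k) (hn : 0 < n) {t : ℕ} {u : List ℕ}
    (hu : u ∈ preferMaxAux k n t) : u ∈ words k n := by
  obtain ⟨s, -, rfl⟩ := mem_preferMaxAux.1 hu
  exact preferMax_mem_words hk hn s

/-! Words are the edges of the de Bruijn graph: `u` goes from `u.dropLast` to `u.tail`. -/

def inDeg (H : List (List ℕ)) (z : List ℕ) : ℕ := H.countP (·.tail = z)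

def outDeg (H : List (List ℕ)) (z : List ℕ) : ℕ := H.countP (·.dropLast = z)

theorem tail_eq_iff_mem_map_cons (hn : 0 < n) {u z : List ℕ} (hu : u ∈ words k n) :
    u.tail = z ↔ u ∈ (range k).map (· :: z) := by
  obtain ⟨hl, hc⟩ := mem_words.1 hu
  obtain ⟨σ, u, rfl⟩ := exists_cons_of_length_pos (hl ▸ hn)
  simp [hc σ mem_cons_self, eq_comm]

theorem dropLast_eq_iff_mem_map_concat (hn : 0 < n) {u z : List ℕ} (hu : u ∈ words k n) :
    u.dropLast = z ↔ u ∈ (range k).map (z ++ [·]) := by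
  obtain ⟨hl, hc⟩ := mem_words.1 hu
  obtain ⟨u, τ, rfl⟩ := eq_nil_or_concat u |>.resolve_left fun hu => by
    simp only [hu, length_nil] at hl
    omega
  simp [hc τ (by simp), eq_comm]

section Degrees

variable {H : List (List ℕ)} (hn : 0 < n) (hH : H.Nodup) (hw : ∀ u ∈ H, u ∈ words k n)
include hn hH hw

theorem inDeg_le (z : List ℕ) : inDeg H z ≤ k :=
  (countP_le_length_of_nodup hH fun u hu h =>
    (tail_eq_iff_mem_map_cons hn (hw u hu)).1 (by simpa using h)).trans (by simp)

theorem le_inDeg_iff (z : List ℕ) : k ≤ inDeg H z ↔ ∀ σ < k, σ :: z ∈ H := by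
  have := length_le_countP_iff_subset (p := (·.tail = z)) hH
    ((nodup_range).map fun _ _ h => (cons.inj h).1)
    fun u hu => by simpa using tail_eq_iff_mem_map_cons hn (hw u hu)
  simpa [inDeg, subset_def] using this

theorem le_outDeg_iff (z : List ℕ) : k ≤ outDeg H z ↔ ∀ τ < k, z ++ [τ] ∈ H := by
  have := length_le_countP_iff_subset (p := (·.dropLast = z)) hH
    ((nodup_range).map fun a b (h : z ++ [a] = z ++ [b]) => by simpa using h)
    fun u hu => by simpa using dropLast_eq_iff_mem_map_concat hn (hw u hu)
  simpa [outDeg, subset_def] using this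

end Degrees

/-- The windows used so far form a walk from `0^{n-1}` to the current state. -/
theorem outDeg_add_ite_eq_inDeg_add_ite (k n t : ℕ) (z : List ℕ) :
    outDeg (preferMaxAux k n t) z + (if (preferMax k n t).tail = z then 1 else 0) =
      inDeg (preferMaxAux k n t) z + (if replicate (n - 1) 0 = z then 1 else 0) := by
  induction t with
  | zero =>
    simp only [outDeg, inDeg, preferMaxAux, preferMax, countP_singleton, headI_cons,
      dropLast_concat, decide_eq_true_eq]
    exact Nat.add_comm _ _
  | succ t ih =>
    simp only [outDeg, inDeg, preferMaxAux_succ, greedyStep, preferMax, countP_cons,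
      headI_cons, dropLast_concat, decide_eq_true_eq] at ih ⊢
    grind

theorem concat_mem_preferMaxAux_of_le {t τ τ' : ℕ} {z : List ℕ}
    (h : z ++ [τ] ∈ preferMaxAux k n t) (hτ : τ ≤ τ') (hτ' : τ' < k) :
    z ++ [τ'] ∈ preferMaxAux k n t := by
  induction t with
  | zero =>
    simp only [preferMaxAux, mem_singleton] at h ⊢
    obtain ⟨rfl, hτk⟩ := append_inj' h rfl
    rw [singleton_inj] at hτk
    rw [show τ' = k - 1 by omega]
  | succ t ih =>
    rw [preferMaxAux_succ, greedyStep, mem_cons] at h ⊢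
    rcases h with h | h
    · obtain ⟨rfl, hτs⟩ := append_inj' h rfl
      rw [singleton_inj] at hτs
      rcases hτ.eq_or_lt with rfl | hlt
      · exact Or.inl (by rw [hτs])
      · refine Or.inr (not_not.1 (Nat.findGreatest_is_greatest
          (P := fun τ => (preferMaxAux k n t).headI.tail ++ [τ] ∉ preferMaxAux k n t)
          (lt_of_eq_of_lt hτs.symm hlt) (show τ' ≤ k - 1 by omega)))
    · exact Or.inr (ih h)

theorem outDeg_eq_inDeg_of_tail_eq {t : ℕ} (h : (preferMax k n t).tail = replicate (n - 1) 0)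
    (z : List ℕ) : outDeg (preferMaxAux k n t) z = inDeg (preferMaxAux k n t) z := by
  have := outDeg_add_ite_eq_inDeg_add_ite k n t z
  rw [h] at this
  omega

section Closed

variable {t : ℕ} (hk : 0 < k) (hn : 0 < n) (hnd : (preferMaxAux k n t).Nodup)
  (hclosed : (preferMax k n t).tail = replicate (n - 1) 0)
include hk hn hnd hclosed

theorem forall_concat_mem_of_forall_cons_mem {z : List ℕ}
    (h : ∀ σ < k, σ :: z ∈ preferMaxAux k n t) :
    ∀ τ < k, z ++ [τ] ∈ preferMaxAux k n t := by
  have hw := fun u => mem_words_of_mem_preferMaxAux (t := t) (u := u) hk hn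
  rw [← le_outDeg_iff hn hnd hw, outDeg_eq_inDeg_of_tail_eq hclosed, le_inDeg_iff hn hnd hw]
  exact h

theorem forall_cons_mem_of_concat_zero_mem {z : List ℕ} (h : z ++ [0] ∈ preferMaxAux k n t) :
    ∀ σ < k, σ :: z ∈ preferMaxAux k n t := by
  have hw := fun u => mem_words_of_mem_preferMaxAux (t := t) (u := u) hk hn
  rw [← le_inDeg_iff hn hnd hw, ← outDeg_eq_inDeg_of_tail_eq hclosed, le_outDeg_iff hn hnd hw]
  exact fun τ hτ => concat_mem_preferMaxAux_of_le h τ.zero_le hτ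

theorem append_mem_of_append_replicate_mem (m : ℕ) {y : List ℕ}
    (h : y ++ replicate m 0 ∈ preferMaxAux k n t) :
    ∀ u ∈ words k m, u ++ y ∈ preferMaxAux k n t := by
  induction m generalizing y with
  | zero => simpa [mem_words] using h
  | succ m ih =>
    intro u hu
    obtain ⟨hl, hc⟩ := mem_words.1 hu
    obtain ⟨σ, u, rfl⟩ := exists_cons_of_length_pos (by omega : 0 < u.length)
    have hu' : u ++ y ++ [0] ∈ preferMaxAux k n t := by
      rw [append_assoc]
      refine ih (by simpa [replicate_succ] using h) u (mem_words.2 ⟨by simpa using hl, ?_⟩)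
      exact fun c hc' => hc c (mem_cons_of_mem σ hc')
    exact forall_cons_mem_of_concat_zero_mem hk hn hnd hclosed hu' σ (hc σ mem_cons_self)

theorem append_mem_of_forall_append_mem (m : ℕ) {y : List ℕ}
    (h : ∀ x ∈ words k m, x ++ y ∈ preferMaxAux k n t) :
    ∀ u ∈ words k m, y ++ u ∈ preferMaxAux k n t := by
  induction m generalizing y with
  | zero => simpa [mem_words] using h
  | succ m ih =>
    intro u hu
    obtain ⟨hl, hc⟩ := mem_words.1 hu
    obtain ⟨u, τ, rfl⟩ := eq_nil_or_concat u |>.resolve_left (by rintro rfl; simp at hl)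
    have hcons : ∀ σ < k, σ :: (y ++ u) ∈ preferMaxAux k n t := by
      intro σ hσ
      refine ih (y := σ :: y) (fun x hx => ?_) u (mem_words.2 ⟨by simpa using hl, ?_⟩)
      · obtain ⟨hxl, hxc⟩ := mem_words.1 hx
        have hxσ : x ++ [σ] ∈ words k (m + 1) := by
          refine mem_words.2 ⟨by simpa using hxl, fun c hc' => ?_⟩
          rcases mem_append.1 hc' with hc' | hc'
          exacts [hxc c hc', (mem_singleton.1 hc') ▸ hσ]
        simpa using h _ hxσ
      · exact fun c hc' => hc c (by simp [hc'])
    simpa using forall_concat_mem_of_forall_cons_mem hk hn hnd hclosed hcons τ (hc τ (by simp))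

end Closed

theorem pow_le_length_of_words_subset {H : List (List ℕ)} (h : ∀ u ∈ words k n, u ∈ H) :
    k ^ n ≤ H.length := by
  calc k ^ n = (words k n).card := (card_words k n).symm
    _ ≤ H.toFinset.card := Finset.card_le_card fun u hu => mem_toFinset.2 (h u hu)
    _ ≤ H.length := toFinset_card_le H

/-- If the new window had been used, so would all out-edges of the current state; the walk
identity then forces the state to be `0^{n-1}`, and from there all `k ^ n` words are used. -/
theorem preferMax_succ_notMem (hk : 0 < k) (hn : 0 < n) {t : ℕ} (ht : t + 1 < k ^ n)
    (hnd : (preferMaxAux k n t).Nodup) : preferMax k n (t + 1) ∉ preferMaxAux k n t := by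
  set x := (preferMax k n t).tail with hx
  intro hmem
  have hw := fun u => mem_words_of_mem_preferMaxAux (t := t) (u := u) hk hn
  have hfull : ∀ τ < k, x ++ [τ] ∈ preferMaxAux k n t := fun τ hτ => by
    by_contra hτ'
    exact Nat.findGreatest_spec (P := fun τ => x ++ [τ] ∉ preferMaxAux k n t) (m := τ)
      (by omega) hτ' hmem
  have hclosed : (preferMax k n t).tail = replicate (n - 1) 0 := by
    have hflow := outDeg_add_ite_eq_inDeg_add_ite k n t x
    have hout := (le_outDeg_iff hn hnd hw x).2 hfull
    have hin := inDeg_le hn hnd hw x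
    by_contra hne
    rw [if_pos rfl, if_neg (Ne.symm hne)] at hflow
    omega
  have hzero : [] ++ replicate n 0 ∈ preferMaxAux k n t := by
    have : replicate n 0 = x ++ [0] := by
      rw [hx, hclosed, ← replicate_succ']
      congr 1
      omega
    rw [nil_append, this]
    exact hfull 0 hk
  have := pow_le_length_of_words_subset fun u hu =>
    (append_nil u) ▸ append_mem_of_append_replicate_mem hk hn hnd hclosed n hzero u hu
  rw [length_preferMaxAux] at this
  omega

theorem nodup_preferMaxAux (hk : 0 < k) (hn : 0 < n) {t : ℕ} (ht : t < k ^ n) :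
    (preferMaxAux k n t).Nodup := by
  induction t with
  | zero => exact nodup_singleton _
  | succ t ih =>
    have hnd := ih (by omega)
    exact nodup_cons.2 ⟨preferMax_succ_notMem hk hn ht hnd, hnd⟩

theorem preferMax_ne_of_lt (hk : 0 < k) (hn : 0 < n) {s t : ℕ} (hst : s < t) (ht : t < k ^ n) :
    preferMax k n s ≠ preferMax k n t := by
  obtain ⟨t, rfl⟩ : ∃ r, t = r + 1 := ⟨t - 1, by omega⟩
  intro h
  exact preferMax_succ_notMem hk hn ht (nodup_preferMaxAux hk hn (by omega))
    (h ▸ preferMax_mem_preferMaxAux (by omega))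

theorem mem_preferMaxAux_of_mem_words (hk : 0 < k) (hn : 0 < n) {u : List ℕ}
    (hu : u ∈ words k n) : u ∈ preferMaxAux k n (k ^ n - 1) := by
  have hpos : 0 < k ^ n := pow_pos hk n
  have hnd := nodup_preferMaxAux hk hn (t := k ^ n - 1) (by omega)
  have : (preferMaxAux k n (k ^ n - 1)).toFinset = words k n := by
    refine Finset.eq_of_subset_of_card_le
      (fun u hu => mem_words_of_mem_preferMaxAux hk hn (mem_toFinset.1 hu)) ?_
    rw [card_words, toFinset_card_of_nodup hnd, length_preferMaxAux]
    omega
  exact mem_toFinset.1 (this ▸ hu)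

theorem tail_mem_words {u : List ℕ} (hu : u ∈ words k n) : u.tail ∈ words k (n - 1) := by
  obtain ⟨hl, hc⟩ := mem_words.1 hu
  exact mem_words.2 ⟨by simp [hl], fun c hc' => hc c (mem_of_mem_tail hc')⟩

theorem card_filter_mem_words (k n : ℕ) :
    ((words (k + 1) n).filter (k ∈ ·)).card = (k + 1) ^ n - k ^ n := by
  have hsplit := Finset.card_filter_add_card_filter_not (s := words (k + 1) n) (k ∈ ·)
  have hnot : (words (k + 1) n).filter (k ∉ ·) = words k n := by
    ext u
    simp only [Finset.mem_filter, mem_words]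
    constructor
    · rintro ⟨⟨hl, hc⟩, hk⟩
      refine ⟨hl, fun c hc' => lt_of_le_of_ne (Nat.lt_succ_iff.1 (hc c hc')) ?_⟩
      rintro rfl
      exact hk hc'
    · rintro ⟨hl, hc⟩
      exact ⟨⟨hl, fun c hc' => (hc c hc').trans k.lt_succ_self⟩, fun hk => (hc k hk).false⟩
  rw [hnot, card_words, card_words] at hsplit
  omega

section FirstAvoiding

variable {t : ℕ} (hk : 0 < k) (hn : 0 < n) (ht : t + 1 < (k + 1) ^ n)
  (hnot : k ∉ preferMax (k + 1) n (t + 1)) (hmem : ∀ s ≤ t, k ∈ preferMax (k + 1) n s)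
include hn ht hnot hmem

/-- The window `x k` entering `x` was used before; it must be `w₀`, since otherwise the window
preceding it would be `k x = wₜ`. -/
theorem preferMax_eq_cons_replicate_of_first_avoiding :
    preferMax (k + 1) n t = k :: replicate (n - 1) 0 := by
  set x := (preferMax (k + 1) n t).tail with hx
  have hkx : k ∉ x := fun h => hnot (mem_append_left _ h)
  have hwt : preferMax (k + 1) n t = k :: x :=
    eq_cons_tail_of_mem_of_notMem_tail (hmem t le_rfl) hkx
  have hxk : x ++ [k] ∈ preferMaxAux (k + 1) n t := by
    by_contra hxk
    have hge : k ≤ nextSymbol (k + 1) (preferMaxAux (k + 1) n t) :=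
      Nat.le_findGreatest (P := fun τ => x ++ [τ] ∉ preferMaxAux (k + 1) n t) le_rfl hxk
    have hle : nextSymbol (k + 1) (preferMaxAux (k + 1) n t) ≤ k := nextSymbol_le _ _
    refine hnot (mem_append_right _ (mem_singleton.2 ?_))
    change k = nextSymbol (k + 1) (preferMaxAux (k + 1) n t)
    omega
  obtain ⟨s, hs, hws⟩ := mem_preferMaxAux.1 hxk
  rw [hwt]
  cases s with
  | zero =>
    rw [preferMax_zero] at hws
    rw [(append_inj' hws rfl).1]
  | succ s =>
    rw [preferMax_succ] at hws
    have hprev : (preferMax (k + 1) n s).tail = x := (append_inj' hws rfl).1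
    have hws' := eq_cons_tail_of_mem_of_notMem_tail (hmem s (by omega)) (hprev ▸ hkx)
    rw [hprev, ← hwt] at hws'
    exact absurd hws' (preferMax_ne_of_lt (by omega : 0 < k + 1) hn (by omega) (by omega))

theorem mem_preferMaxAux_of_top_mem {u : List ℕ} (hu : u ∈ words (k + 1) n) (hku : k ∈ u) :
    u ∈ preferMaxAux (k + 1) n t := by
  have hwt := preferMax_eq_cons_replicate_of_first_avoiding hn ht hnot hmem
  have hk1 : 0 < k + 1 := k.add_one_pos
  have hnd := nodup_preferMaxAux hk1 hn (t := t) (by omega)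
  have hclosed : (preferMax (k + 1) n t).tail = replicate (n - 1) 0 := by rw [hwt, tail_cons]
  have hend : ∀ x ∈ words (k + 1) (n - 1), x ++ [k] ∈ preferMaxAux (k + 1) n t :=
    append_mem_of_append_replicate_mem hk1 hn hnd hclosed (n - 1)
      (by rw [singleton_append, ← hwt]; exact preferMax_mem_preferMaxAux le_rfl)
  obtain ⟨a, b, rfl⟩ := append_of_mem hku
  obtain ⟨hl, hc⟩ := mem_words.1 hu
  simp only [length_append, length_cons] at hl
  rw [← singleton_append, ← append_assoc]
  refine append_mem_of_forall_append_mem hk1 hn hnd hclosed b.length (fun x hx => ?_) b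
    (mem_words.2 ⟨rfl, fun c hc' => hc c (by simp [hc'])⟩)
  obtain ⟨hxl, hxc⟩ := mem_words.1 hx
  rw [← append_assoc]
  refine hend _ (mem_words.2 ⟨by simp only [length_append]; omega, fun c hc' => ?_⟩)
  rcases mem_append.1 hc' with hc' | hc'
  exacts [hxc c hc', hc c (by simp [hc'])]

theorem succ_eq_pow_sub_pow_of_first_avoiding : t + 1 = (k + 1) ^ n - k ^ n := by
  have hnd := nodup_preferMaxAux k.add_one_pos hn (t := t) (by omega)
  have : (preferMaxAux (k + 1) n t).toFinset = (words (k + 1) n).filter (k ∈ ·) := by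
    ext u
    rw [mem_toFinset, Finset.mem_filter]
    refine ⟨fun hu => ⟨mem_words_of_mem_preferMaxAux k.add_one_pos hn hu, ?_⟩,
      fun hu => mem_preferMaxAux_of_top_mem hn ht hnot hmem hu.1 hu.2⟩
    obtain ⟨s, hs, rfl⟩ := mem_preferMaxAux.1 hu
    exact hmem s hs
  rw [← card_filter_mem_words, ← this, toFinset_card_of_nodup hnd, length_preferMaxAux]

include hk in
theorem preferMax_succ_eq_of_first_avoiding :
    preferMax (k + 1) n (t + 1) = replicate (n - 1) 0 ++ [k - 1] := by
  have hx : (preferMax (k + 1) n t).tail = replicate (n - 1) 0 := by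
    rw [preferMax_eq_cons_replicate_of_first_avoiding hn ht hnot hmem, tail_cons]
  have hle : nextSymbol (k + 1) (preferMaxAux (k + 1) n t) ≤ k := nextSymbol_le _ _
  have hne : nextSymbol (k + 1) (preferMaxAux (k + 1) n t) ≠ k := fun h =>
    hnot (by rw [preferMax_succ, h]; exact mem_append_right _ (mem_singleton_self k))
  have hge : k - 1 ≤ nextSymbol (k + 1) (preferMaxAux (k + 1) n t) := by
    refine Nat.le_findGreatest (P := fun τ => (preferMax (k + 1) n t).tail ++ [τ] ∉ _)
      (by omega) fun h => ?_
    obtain ⟨s, hs, hws⟩ := mem_preferMaxAux.1 h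
    have := hws ▸ hmem s hs
    simp only [hx, mem_append, mem_replicate, mem_singleton] at this
    omega
  rw [preferMax_succ, hx, show nextSymbol (k + 1) (preferMaxAux (k + 1) n t) = k - 1 by omega]

end FirstAvoiding

theorem exists_first_avoiding (hk : 0 < k) (hn : 0 < n) :
    ∃ t, t + 1 < (k + 1) ^ n ∧ k ∉ preferMax (k + 1) n (t + 1) ∧
      ∀ s ≤ t, k ∈ preferMax (k + 1) n s := by
  have hex : ∃ s, k ∉ preferMax (k + 1) n s := by
    obtain ⟨s, -, hs⟩ := mem_preferMaxAux.1
      (mem_preferMaxAux_of_mem_words k.add_one_pos hn (u := replicate n 0) (by simp [mem_words]))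
    exact ⟨s, by simp only [hs, mem_replicate]; omega⟩
  have hbound : Nat.find hex ≤ (k + 1) ^ n - 1 := by
    obtain ⟨s, hs, hws⟩ := mem_preferMaxAux.1
      (mem_preferMaxAux_of_mem_words k.add_one_pos hn (u := replicate n 0) (by simp [mem_words]))
    exact (Nat.find_min' hex (by simp only [hws, mem_replicate]; omega)).trans hs
  have hpos : Nat.find hex ≠ 0 := fun h =>
    Nat.find_spec hex (by simp [h, preferMax_zero])
  have hpow : 0 < (k + 1) ^ n := pow_pos k.add_one_pos n
  refine ⟨Nat.find hex - 1, by omega, ?_, fun s hs => not_not.1 (Nat.find_min hex (by omega))⟩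
  exact Nat.sub_add_cancel (Nat.pos_of_ne_zero hpos) ▸ Nat.find_spec hex

/-- For a history `H` of the `(k+1)`-walk and a history `H'` of the `k`-walk, an invariant under
which both greedy rules append the same symbol. -/
def Mimics (k n : ℕ) (H H' : List (List ℕ)) : Prop :=
  H.headI = H'.headI ∧ H'.headI.tail ∈ words k (n - 1) ∧
    (∀ u : List ℕ, (∀ c ∈ u, c < k) → (u ∈ H ↔ u ∈ H')) ∧
    ∀ x ∈ words k (n - 1), x ++ [k] ∈ H

theorem Mimics.greedyStep (hk : 0 < k) {H H' : List (List ℕ)} (h : Mimics k n H H') :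
    Mimics k n (PreferMax.greedyStep (k + 1) H) (PreferMax.greedyStep k H') := by
  obtain ⟨hhead, hx, hmem, htop⟩ := h
  obtain ⟨hxl, hxc⟩ := mem_words.1 hx
  have hsym : nextSymbol (k + 1) H = nextSymbol k H' := by
    obtain ⟨j, rfl⟩ : ∃ j, k = j + 1 := ⟨k - 1, by omega⟩
    unfold nextSymbol
    rw [hhead, Nat.add_sub_cancel, Nat.findGreatest_of_not (not_not.2 (htop _ hx)),
      Nat.add_sub_cancel]
    refine Nat.findGreatest_congr fun m hm => not_congr (hmem _ fun c hc => ?_)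
    rcases mem_append.1 hc with hc | hc
    exacts [hxc c hc, (mem_singleton.1 hc) ▸ (by omega)]
  have hlt : nextSymbol k H' < k := (nextSymbol_le k H').trans_lt (by omega)
  refine ⟨by simp [PreferMax.greedyStep, hhead, hsym], ?_, fun u hu => ?_, fun x hx' => ?_⟩
  · refine mem_words.2 ⟨by simp [PreferMax.greedyStep, hxl], fun c hc => ?_⟩
    simp only [PreferMax.greedyStep, headI_cons] at hc
    rcases mem_append.1 (mem_of_mem_tail hc) with hc | hc
    exacts [hxc c hc, (mem_singleton.1 hc) ▸ hlt]
  · simp only [PreferMax.greedyStep, mem_cons, hhead, hsym, hmem u hu]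
  · exact mem_cons_of_mem _ (htop x hx')

theorem mimics_start (hk : 0 < k) (hn : 0 < n) :
    Mimics k n (preferMaxAux (k + 1) n ((k + 1) ^ n - k ^ n)) (preferMaxAux k n 0) := by
  obtain ⟨t, ht, hnot, hmem⟩ := exists_first_avoiding hk hn
  have hT := succ_eq_pow_sub_pow_of_first_avoiding hn ht hnot hmem
  have hwT := preferMax_succ_eq_of_first_avoiding hk hn ht hnot hmem
  rw [← hT]
  refine ⟨hwT, tail_mem_words (preferMax_mem_words hk hn 0), fun u hu => ?_, fun x hx => ?_⟩
  · rw [mem_preferMaxAux, mem_preferMaxAux]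
    constructor
    · rintro ⟨s, hs, rfl⟩
      rcases hs.lt_or_eq with hs | rfl
      · exact absurd (hu k (hmem s (by omega))) (lt_irrefl k)
      · exact ⟨0, le_rfl, hwT.symm⟩
    · rintro ⟨s, hs, rfl⟩
      exact ⟨t + 1, le_rfl, by rw [Nat.le_zero.1 hs, hwT]; rfl⟩
  · obtain ⟨hxl, hxc⟩ := mem_words.1 hx
    refine preferMaxAux_subset t.le_succ (mem_preferMaxAux_of_top_mem hn ht hnot hmem
      (mem_words.2 ⟨by rw [length_append, length_singleton]; omega, fun c hc => ?_⟩) (by simp))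
    rcases mem_append.1 hc with hc | hc
    exacts [(hxc c hc).trans k.lt_succ_self, (mem_singleton.1 hc) ▸ k.lt_succ_self]

end PreferMax

/-- **Onion Theorem.** For every `k > 1` and `n ≥ 1`, the `(k-1,n)`-prefer-max sequence
is a suffix of the `(k,n)`-prefer-max sequence: for every `i < (k-1)^n`,
`w_{(k^n-(k-1)^n)+i} = v_i`, where `w` is the `(k,n)`- and `v` the `(k-1,n)`-prefer-max
sequence of windows. -/
theorem preferMax_onion (k n : ℕ) (hk : 1 < k) (hn : 1 ≤ n) :
    ∀ i < (k - 1) ^ n,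
      preferMax k n (k ^ n - (k - 1) ^ n + i) = preferMax (k - 1) n i := by
  obtain ⟨k, rfl⟩ : ∃ j, k = j + 1 := ⟨k - 1, by omega⟩
  simp only [Nat.add_sub_cancel]
  have hk0 : 0 < k := by omega
  have hmimics : ∀ i, PreferMax.Mimics k n (preferMaxAux (k + 1) n ((k + 1) ^ n - k ^ n + i))
      (preferMaxAux k n i) := fun i => by
    induction i with
    | zero => exact PreferMax.mimics_start hk0 hn
    | succ i ih => exact ih.greedyStep hk0
  exact fun i _ => (hmimics i).1
end

section
/- Let (w_i)_{i=0}^{k^n-1} be the (k,n)-prefer-max cycle with k > 1, n ≥ 1, and let i_0 = min{ i : the symbol k-1 does not occur in w_i }. Then w_{i_0 - 1} = (k-1)0^{n-1}, i.e., the last window containing the symbol k-1 before position i_0 is the symbol k-1 followed by n-1 zeros. -/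
/-!
As long as every window contains `k - 1`, the windows are pairwise distinct, so the greedy rule
never gets stuck.  Indeed, write `wᵢ = σx`.  If `k - 1 ∈ x`, no `xτ` is `w₀`, and every earlier
occurrence of some `xτ` is preceded by a window `σ'x`; together with `wᵢ` these are distinct
windows of the form `σ'x`, at most `k` of them, so some of the `k` extensions `xτ` is fresh.
If `k - 1 ∉ x`, then `x0` is fresh because it avoids `k - 1`.

Now let `m = i₀ - 1` and `w_m = σx`.  Since `w_{m+1} = xτ` avoids `k - 1`, we get `σ = k - 1`,
and as the greedy rule did not choose `τ = k - 1`, the word `x(k-1)` is some `w_j` with `j ≤ m`.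
If `j > 0`, then `w_{j-1}` is a window `σ'x` containing `k - 1`, i.e. `w_{j-1} = (k-1)x = w_m`,
contradicting distinctness.  Hence `j = 0` and `x = 0^{n-1}`.
-/

theorem List.eq_cons_tail_of_mem_of_notMem_tail_s2 {α : Type*} {a : α} {l : List α}
    (ha : a ∈ l) (ha' : a ∉ l.tail) : l = a :: l.tail := by
  cases l with
  | nil => simp at ha
  | cons b t =>
    obtain rfl | h := List.mem_cons.mp ha
    · rfl
    · exact absurd h ha'

section SlidingWindow

variable {w : ℕ → List ℕ} {i k : ℕ}

theorem tail_eq_of_succ_eq_append (hw : ∀ j, ∃ c, w (j + 1) = (w j).tail ++ [c])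
    {j : ℕ} {x : List ℕ} {τ : ℕ} (h : w (j + 1) = x ++ [τ]) : (w j).tail = x := by
  obtain ⟨c, hc⟩ := hw j
  exact (List.append_inj' (hc.symm.trans h) rfl).1

theorem exists_tail_append_ne_of_injOn (hw : ∀ j, ∃ c, w (j + 1) = (w j).tail ++ [c])
    (hinj : Set.InjOn w (Set.Iic i)) (hne : ∀ j ≤ i, w j ≠ [])
    (hlt : ∀ j ≤ i, ∀ a ∈ w j, a < k) (h0 : ∀ τ, w 0 ≠ (w i).tail ++ [τ]) :
    ∃ τ < k, ∀ j ≤ i, w j ≠ (w i).tail ++ [τ] := by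
  by_contra! hseen
  set x := (w i).tail
  set A := (Finset.range i).filter fun j => (w j).tail = x
  have hk_le : k ≤ A.card := by
    have hsub : (Finset.range k).image (fun τ => x ++ [τ]) ⊆ A.image (fun j => w (j + 1)) := by
      intro y hy
      obtain ⟨τ, hτ, rfl⟩ := Finset.mem_image.mp hy
      obtain ⟨j, hj, hjx⟩ := hseen τ (Finset.mem_range.mp hτ)
      obtain ⟨s, rfl⟩ : ∃ s, j = s + 1 :=
        Nat.exists_eq_add_one.mpr (Nat.pos_of_ne_zero fun h => h0 τ (h ▸ hjx))
      refine Finset.mem_image.mpr ⟨s, ?_, hjx⟩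
      exact Finset.mem_filter.mpr ⟨Finset.mem_range.mpr (by omega),
        tail_eq_of_succ_eq_append hw hjx⟩
    calc k = ((Finset.range k).image (fun τ => x ++ [τ])).card := by
          rw [Finset.card_image_of_injective _ fun _ _ h => by simpa using h, Finset.card_range]
      _ ≤ (A.image (fun j => w (j + 1))).card := Finset.card_le_card hsub
      _ ≤ A.card := Finset.card_image_le
  have hcard_lt : A.card + 1 ≤ k := by
    have hsubI : ((insert i A : Finset ℕ) : Set ℕ) ⊆ Set.Iic i := by
      intro j hj
      rcases Finset.mem_insert.mp hj with rfl | hj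
      · exact Set.mem_Iic.mpr le_rfl
      · exact Set.mem_Iic.mpr (Finset.mem_range.mp (Finset.mem_filter.mp hj).1).le
    have hmaps : Set.MapsTo w (insert i A : Finset ℕ) ((Finset.range k).image (· :: x)) := by
      intro j hj
      have hji : j ≤ i := hsubI hj
      have htail : (w j).tail = x := by
        rcases Finset.mem_insert.mp hj with rfl | hj
        · rfl
        · exact (Finset.mem_filter.mp hj).2
      obtain ⟨a, t, hat⟩ := List.exists_cons_of_ne_nil (hne j hji)
      rw [hat] at htail ⊢
      refine Finset.mem_image.mpr ⟨a, Finset.mem_range.mpr (hlt j hji a ?_), by rw [← htail]; rfl⟩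
      simp [hat]
    calc A.card + 1 = (insert i A).card :=
          (Finset.card_insert_of_notMem fun h =>
            Finset.notMem_range_self (Finset.mem_filter.mp h).1).symm
      _ ≤ ((Finset.range k).image (· :: x)).card :=
          Finset.card_le_card_of_injOn w hmaps (hinj.mono hsubI)
      _ ≤ k := Finset.card_image_le.trans (Finset.card_range k).le
  omega

end SlidingWindow

section PreferMax

variable {k n i : ℕ}

theorem preferMax_zero (k n : ℕ) : preferMax k n 0 = List.replicate (n - 1) 0 ++ [k - 1] := rfl

theorem preferMax_succ_eq_append (k n i : ℕ) :
    ∃ c, preferMax k n (i + 1) = (preferMax k n i).tail ++ [c] := ⟨_, rfl⟩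

theorem preferMaxAux_eq_reverse_map (k n i : ℕ) :
    preferMaxAux k n i = ((List.range (i + 1)).map (preferMax k n)).reverse := by
  induction i with
  | zero => rfl
  | succ i ih => rw [List.range_succ, List.map_append, List.reverse_append, ← ih]; rfl

theorem mem_preferMaxAux {y : List ℕ} :
    y ∈ preferMaxAux k n i ↔ ∃ j ≤ i, preferMax k n j = y := by
  simp [preferMaxAux_eq_reverse_map]

theorem length_preferMax (hn : 1 ≤ n) (k i : ℕ) : (preferMax k n i).length = n := by
  induction i with
  | zero =>
    rw [preferMax_zero, List.length_append, List.length_replicate, List.length_singleton]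
    omega
  | succ i ih =>
    obtain ⟨c, hc⟩ := preferMax_succ_eq_append k n i
    rw [hc, List.length_append, List.length_tail, ih, List.length_singleton]
    omega

theorem preferMax_ne_nil (hn : 1 ≤ n) (k i : ℕ) : preferMax k n i ≠ [] := by
  rw [← List.length_pos_iff, length_preferMax hn]
  exact hn

theorem le_of_mem_preferMax {a : ℕ} (ha : a ∈ preferMax k n i) : a ≤ k - 1 := by
  induction i with
  | zero =>
    rw [preferMax_zero, List.mem_append, List.mem_singleton] at ha
    rcases ha with ha | rfl
    · rw [List.eq_of_mem_replicate ha]; exact Nat.zero_le _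
    · exact le_rfl
  | succ i ih =>
    rcases List.mem_append.mp ha with ha | ha
    · exact ih (List.mem_of_mem_tail ha)
    · exact (List.mem_singleton.mp ha).symm ▸ Nat.findGreatest_le _

theorem preferMax_succ_ne_of_exists
    (h : ∃ τ ≤ k - 1, ∀ j ≤ i, preferMax k n j ≠ (preferMax k n i).tail ++ [τ]) :
    ∀ j ≤ i, preferMax k n j ≠ preferMax k n (i + 1) := by
  obtain ⟨τ, hτ, hfresh⟩ := h
  have hnext := Nat.findGreatest_spec
    (P := fun τ => (preferMax k n i).tail ++ [τ] ∉ preferMaxAux k n i) hτ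
    fun hmem => by
      obtain ⟨j, hj, hjeq⟩ := mem_preferMaxAux.mp hmem
      exact hfresh j hj hjeq
  exact fun j hj heq => hnext (mem_preferMaxAux.mpr ⟨j, hj, heq⟩)

theorem preferMax_succ_eq_of_forall_ne
    (h : ∀ j ≤ i, preferMax k n j ≠ (preferMax k n i).tail ++ [k - 1]) :
    preferMax k n (i + 1) = (preferMax k n i).tail ++ [k - 1] := by
  have hnew : (preferMax k n i).tail ++ [k - 1] ∉ preferMaxAux k n i := fun hmem => by
    obtain ⟨j, hj, hjeq⟩ := mem_preferMaxAux.mp hmem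
    exact h j hj hjeq
  exact congrArg (fun τ => (preferMax k n i).tail ++ [τ]) (Nat.findGreatest_eq hnew)

theorem exists_fresh_symbol (hk : 1 < k) (hn : 1 ≤ n)
    (hinj : Set.InjOn (preferMax k n) (Set.Iic i)) (hall : ∀ j ≤ i, k - 1 ∈ preferMax k n j) :
    ∃ τ ≤ k - 1, ∀ j ≤ i, preferMax k n j ≠ (preferMax k n i).tail ++ [τ] := by
  by_cases hx : k - 1 ∈ (preferMax k n i).tail
  · have h0 : ∀ τ, preferMax k n 0 ≠ (preferMax k n i).tail ++ [τ] := fun τ h => by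
      rw [preferMax_zero] at h
      rw [← (List.append_inj' h rfl).1] at hx
      have := List.eq_of_mem_replicate hx
      omega
    obtain ⟨τ, hτ, hfresh⟩ := exists_tail_append_ne_of_injOn (k := k)
      (preferMax_succ_eq_append k n) hinj (fun j _ => preferMax_ne_nil hn k j)
      (fun j _ a ha => (le_of_mem_preferMax ha).trans_lt (by omega)) h0
    exact ⟨τ, by omega, hfresh⟩
  · refine ⟨0, Nat.zero_le _, fun j hj h => ?_⟩
    have hmem := hall j hj
    rw [h, List.mem_append, List.mem_singleton] at hmem
    rcases hmem with hmem | hmem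
    · exact hx hmem
    · omega

theorem injOn_preferMax (hk : 1 < k) (hn : 1 ≤ n) (hall : ∀ j ≤ i, k - 1 ∈ preferMax k n j) :
    Set.InjOn (preferMax k n) (Set.Iic i) := by
  induction i with
  | zero => exact fun a ha b hb _ => by simp only [Set.mem_Iic] at ha hb; omega
  | succ i ih =>
    have hinj := ih fun j hj => hall j (by omega)
    have hnew := preferMax_succ_ne_of_exists
      (exists_fresh_symbol hk hn hinj fun j hj => hall j (by omega))
    intro a ha b hb hab
    simp only [Set.mem_Iic] at ha hb
    rcases Nat.of_le_succ ha with ha | rfl <;> rcases Nat.of_le_succ hb with hb | rfl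
    · exact hinj ha hb hab
    · exact absurd hab (hnew a ha)
    · exact absurd hab.symm (hnew b hb)
    · rfl

end PreferMax

/-- Let `i₀ = min { i : the symbol k-1 does not occur in wᵢ }` for the
`(k,n)`-prefer-max cycle with `k > 1`, `n ≥ 1`.  Then `w_{i₀-1} = (k-1)0^{n-1}`. -/
theorem preferMax_window_before_first_layer_end (k n i₀ : ℕ) (hk : 1 < k) (hn : 1 ≤ n)
    (hi₀ : (k - 1) ∉ preferMax k n i₀)
    (hmin : ∀ j < i₀, (k - 1) ∈ preferMax k n j) :
    preferMax k n (i₀ - 1) = (k - 1) :: List.replicate (n - 1) 0 := by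
  obtain ⟨m, rfl⟩ : ∃ m, i₀ = m + 1 := Nat.exists_eq_add_one.mpr <| Nat.pos_of_ne_zero <| by
    rintro rfl
    exact hi₀ (by simp [preferMax_zero])
  rw [Nat.add_sub_cancel]
  set x := (preferMax k n m).tail
  obtain ⟨c, hc⟩ := preferMax_succ_eq_append k n m
  have hx : k - 1 ∉ x := fun h => hi₀ (hc ▸ List.mem_append_left _ h)
  have hinj := injOn_preferMax (i := m) hk hn fun j hj => hmin j (by omega)
  have hcons : ∀ j ≤ m, (preferMax k n j).tail = x → preferMax k n j = (k - 1) :: x :=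
    fun j hj h => h ▸ List.eq_cons_tail_of_mem_of_notMem_tail_s2 (hmin j (by omega)) (h ▸ hx)
  obtain ⟨j, hj, hjx⟩ : ∃ j ≤ m, preferMax k n j = x ++ [k - 1] := by
    by_contra! hnew
    exact hi₀ (by rw [preferMax_succ_eq_of_forall_ne hnew]; simp)
  rcases j with _ | s
  · rw [preferMax_zero] at hjx
    rw [hcons m le_rfl rfl, (List.append_inj' hjx rfl).1]
  · have hs := tail_eq_of_succ_eq_append (preferMax_succ_eq_append k n) hjx
    have := hinj (Set.mem_Iic.mpr (by omega : s ≤ m)) (Set.mem_Iic.mpr le_rfl)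
      ((hcons s (by omega) hs).trans (hcons m le_rfl rfl).symm)
    omega
end

section
/- Let (x_i)_{i=0}^∞ be an onion De Bruijn sequence of order n. Then for every word y = σ_1...σ_{n-1} ∈ ℕ^{n-1}, setting μ_y = max_i σ_i, the words yτ for τ ≥ μ_y appear in increasing order in (x_i): for all σ, σ' with μ_y ≤ σ < σ', the (unique) position at which the word yσ occurs as a window of (x_i) is strictly smaller than the position at which yσ' occurs. -/
/-- The window of length `n` of the infinite sequence `x` starting at position `i`,
namely the word `x i, x (i+1), …, x (i+n-1)`. -/
def window (x : ℕ → ℕ) (n i : ℕ) : List ℕ := (List.range n).map fun t => x (i + t)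

/-- `x` is an onion De Bruijn sequence of order `n`: for every `k ≥ 1`, the `k^n`
windows of length `n` starting at positions `0,…,k^n - 1` are pairwise distinct and
constitute exactly the set `[k]^n` of words of length `n` over `{0,…,k-1}`. -/
def IsOnionDeBruijn (x : ℕ → ℕ) (n : ℕ) : Prop :=
  ∀ k, 1 ≤ k →
    (∀ i < k ^ n, ∀ j < k ^ n, window x n i = window x n j → i = j) ∧
    (∀ w : List ℕ, (∃ i < k ^ n, window x n i = w) ↔ (w.length = n ∧ ∀ σ ∈ w, σ < k))

/-! Let `k = σ + 1`. The word `yσ` lies in `[k]^n`, so its (unique) occurrence is before position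
`k^n`, while `yσ'` contains the symbol `σ' ≥ k`, so it cannot occur before position `k^n`. -/

theorem window_length (x : ℕ → ℕ) (n i : ℕ) : (window x n i).length = n := by
  simp [window]

namespace IsOnionDeBruijn

variable {x : ℕ → ℕ} {n : ℕ}

theorem window_injective (hx : IsOnionDeBruijn x n) (hn : n ≠ 0) :
    Function.Injective (window x n) := by
  intro i j hij
  have hK : max i j + 1 ≤ (max i j + 1) ^ n := Nat.le_self_pow hn _
  exact (hx (max i j + 1) (by omega)).1 i (by omega) j (by omega) hij

theorem lt_pow_of_forall_mem_window_lt (hx : IsOnionDeBruijn x n) (hn : n ≠ 0) {k i : ℕ}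
    (hk : 1 ≤ k) (hw : ∀ τ ∈ window x n i, τ < k) : i < k ^ n := by
  obtain ⟨j, hj, hji⟩ := ((hx k hk).2 (window x n i)).2 ⟨window_length x n i, hw⟩
  rwa [← hx.window_injective hn hji]

theorem pow_le_of_le_mem_window (hx : IsOnionDeBruijn x n) {k i τ : ℕ} (hk : 1 ≤ k)
    (hτ : τ ∈ window x n i) (hkτ : k ≤ τ) : k ^ n ≤ i := by
  by_contra! hi
  have := ((hx k hk).2 (window x n i)).1 ⟨i, hi, rfl⟩ |>.2 τ hτ
  omega

end IsOnionDeBruijn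

theorem onionDeBruijn_increasing_general (n : ℕ) (x : ℕ → ℕ) (hx : IsOnionDeBruijn x n)
    (y : List ℕ)
    (σ σ' : ℕ) (hσ : ∀ τ ∈ y, τ ≤ σ) (hσσ' : σ < σ')
    (i i' : ℕ) (hi : window x n i = y ++ [σ]) (hi' : window x n i' = y ++ [σ']) :
    i < i' := by
  have hn : n ≠ 0 := by
    rintro rfl
    simp [window] at hi
  have hyσ_lt : ∀ τ ∈ window x n i, τ < σ + 1 := by
    intro τ hτ
    rw [hi, List.mem_append, List.mem_singleton] at hτ
    rcases hτ with hτ | rfl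
    exacts [Nat.lt_succ_of_le (hσ τ hτ), τ.lt_succ_self]
  calc i < (σ + 1) ^ n := hx.lt_pow_of_forall_mem_window_lt hn (by omega) hyσ_lt
    _ ≤ i' := hx.pow_le_of_le_mem_window (by omega) (by simp [hi']) hσσ'

/-- In an onion De Bruijn sequence of order `n`, for every word `y ∈ ℕ^{n-1}` with
maximal symbol `μ_y`, the words `yτ` for `τ ≥ μ_y` appear in increasing order: if
`μ_y ≤ σ < σ'` and `yσ` occurs as a window at position `i` while `yσ'` occurs as a
window at position `i'`, then `i < i'`. -/
theorem onionDeBruijn_increasing (n : ℕ) (x : ℕ → ℕ) (hx : IsOnionDeBruijn x n)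
    (y : List ℕ) (hy : y.length = n - 1)
    (σ σ' : ℕ) (hσ : ∀ τ ∈ y, τ ≤ σ) (hσσ' : σ < σ')
    (i i' : ℕ) (hi : window x n i = y ++ [σ]) (hi' : window x n i' = y ++ [σ']) :
    i < i' :=
  onionDeBruijn_increasing_general n x hx y σ σ' hσ hσσ' i i' hi hi'
end

section
/- Every binary De Bruijn sequence of order n can be extended to a binary De Bruijn sequence of order n+2: if s is a string of length 2^n + n - 1 over {0,1} whose windows of length n are pairwise distinct, then there exists a string t of length 2^{n+2} + n + 1 over {0,1} whose windows of length n+2 are pairwise distinct and which has s as a prefix. -/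
/-!
Binary strings with pairwise distinct windows of length `n + 2` are trails in the de Bruijn graph
whose vertices are the binary words of length `n + 1` and whose edges are those of length `n + 2`.
Take a longest such trail `t` with prefix `s`. If no letter can be appended, both out-edges of its
last vertex are used; as every vertex has only two in-edges, `t` is then a closed trail. Because
the windows of length `n` of `s` are distinct, `s` uses at most one of the four edges `a x b` with a
given middle `x`, so the edges unused by `s` connect all vertices. Hence some vertex of `t` after `s` has
an out-edge missing from `t`. A longest trail of missing edges starting there closes up by the same
degree argument, and splicing it into `t` gives a longer trail. So `t` uses all `2 ^ (n + 2)` edges.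
-/

namespace DeBruijn

section Windows

variable {α : Type*}

def window (t : List α) (i m : ℕ) : List α := (t.drop i).take m

def windows (t : List α) (m : ℕ) : List (List α) :=
  (List.range (t.length + 1 - m)).map (window t · m)

/-- In the de Bruijn graph on words of length `k`, the walk `x` followed by the walk `y`, when `x`
ends at the vertex where `y` starts. -/
def glue (k : ℕ) (x y : List α) : List α := x ++ y.drop k

variable {t x y : List α} {i j l m k q : ℕ}

theorem length_window (h : i + m ≤ t.length) : (window t i m).length = m := by
  simp only [window, List.length_take, List.length_drop]; omega

theorem take_window (h : l ≤ m) : (window t i m).take l = window t i l := by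
  simp only [window, List.take_take, Nat.min_eq_left h]

theorem drop_window : (window t i m).drop j = window t (i + j) (m - j) := by
  simp only [window, List.drop_take, List.drop_drop]

theorem window_eq_cons (h : i < t.length) : window t i (m + 1) = t[i] :: window t (i + 1) m := by
  rw [window, List.drop_eq_getElem_cons h, List.take_succ_cons]; rfl

theorem window_zero_left : window t 0 m = t.take m := rfl

theorem window_sub_eq_rtake : window t (t.length - m) m = t.rtake m :=
  List.take_of_length_le (by simp; omega)

theorem window_of_prefix {s : List α} (hst : s <+: t) (h : i + m ≤ s.length) :
    window t i m = window s i m := by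
  obtain ⟨r, rfl⟩ := hst
  simp only [window, List.drop_append_of_le_length (show i ≤ s.length by omega),
    List.take_append_of_le_length (show m ≤ (s.drop i).length by simp; omega)]

theorem length_windows : (windows t m).length = t.length + 1 - m := by simp [windows]

theorem mem_windows {u : List α} :
    u ∈ windows t m ↔ ∃ i, i + m ≤ t.length ∧ window t i m = u := by
  simp only [windows, List.mem_map, List.mem_range]
  exact exists_congr fun i => and_congr_left fun _ => by omega

theorem nodup_windows_iff : (windows t m).Nodup ↔
    ∀ i j, i + m ≤ t.length → j + m ≤ t.length → window t i m = window t j m → i = j := by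
  simp only [windows, List.nodup_map_iff_inj_on List.nodup_range, List.mem_range]
  exact forall_congr' fun i => ⟨fun h j hi hj => h (by omega) j (by omega),
    fun h hi j hj => h j (by omega) (by omega)⟩

theorem nodup_windows_of_le {m' : ℕ} (hm : m ≤ m') (hnd : (windows t m).Nodup) :
    (windows t m').Nodup := by
  rw [nodup_windows_iff] at hnd ⊢
  intro i j hi hj hw
  apply hnd i j (by omega) (by omega)
  simpa only [take_window hm] using congrArg (List.take m) hw

theorem windows_eq_nil (h : t.length < m) : windows t m = [] :=
  List.eq_nil_of_length_eq_zero (by rw [length_windows]; omega)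

theorem windows_of_length_eq (h : t.length = m) : windows t m = [t] := by
  simp [windows, h, window]

theorem windows_cons_of_le {a : α} (h : k ≤ t.length) :
    windows (a :: t) (k + 1) = (a :: t).take (k + 1) :: windows t (k + 1) := by
  rw [windows, windows, List.length_cons,
    show t.length + 1 + 1 - (k + 1) = t.length + 1 - (k + 1) + 1 by omega,
    List.range_succ_eq_map, List.map_cons, List.map_map]
  rfl

theorem windows_append (A : List α) :
    windows (A ++ y) (k + 1) = windows (A ++ y.take k) (k + 1) ++ windows y (k + 1) := by
  induction A with
  | nil =>
    rw [List.nil_append, List.nil_append, windows_eq_nil (t := y.take k) (by simp),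
      List.nil_append]
  | cons a A ih =>
    by_cases h : k ≤ (A ++ y).length
    · rw [List.cons_append, List.cons_append, windows_cons_of_le h,
        windows_cons_of_le (by simp at h ⊢; omega), ih, List.cons_append]
      congr 1
      simp [List.take_append, List.take_take]
    · simp only [List.length_append, not_le] at h
      rw [windows_eq_nil (by simp; omega), windows_eq_nil (by simp; omega),
        windows_eq_nil (t := y) (by omega)]
      rfl

theorem glue_eq (h : x.rtake k = y.take k) : glue k x y = x.take (x.length - k) ++ y := by
  calc glue k x y = x.take (x.length - k) ++ x.rtake k ++ y.drop k := by
        rw [List.rtake, List.take_append_drop]; rfl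
    _ = x.take (x.length - k) ++ y := by rw [h, List.append_assoc, List.take_append_drop]

theorem windows_glue (h : x.rtake k = y.take k) :
    windows (glue k x y) (k + 1) = windows x (k + 1) ++ windows y (k + 1) := by
  rw [glue_eq h, windows_append, ← h, List.rtake, List.take_append_drop]

theorem rtake_glue (h : x.rtake k = y.take k) (hy : k ≤ y.length) :
    (glue k x y).rtake k = y.rtake k := by
  rw [glue_eq h, List.rtake, List.rtake, List.length_append, List.drop_append,
    List.drop_of_length_le (by omega), List.nil_append]
  congr 1; omega

theorem take_glue (hx : k ≤ x.length) : (glue k x y).take k = x.take k :=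
  List.take_append_of_le_length hx

theorem length_glue : (glue k x y).length = x.length + (y.length - k) := by simp [glue]

theorem glue_take_drop : glue k (t.take (q + k)) (t.drop q) = t := by
  rw [glue, List.drop_drop, List.take_append_drop]

theorem rtake_take_add (h : q + k ≤ t.length) : (t.take (q + k)).rtake k = window t q k := by
  rw [List.rtake, List.drop_take, List.length_take, Nat.min_eq_left h, Nat.add_sub_cancel,
    Nat.add_sub_cancel_left]
  rfl

theorem rtake_drop (h : q + k ≤ t.length) : (t.drop q).rtake k = t.rtake k := by
  rw [List.rtake, List.rtake, List.drop_drop, List.length_drop]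
  congr 1; omega

theorem windows_append_singleton (h : k ≤ t.length) (c : α) :
    windows (t ++ [c]) (k + 1) = windows t (k + 1) ++ [t.rtake k ++ [c]] := by
  have hlen : (t.rtake k).length = k := by simp [List.rtake]; omega
  have hglue : glue k t (t.rtake k ++ [c]) = t ++ [c] := by
    rw [glue, List.drop_append_of_le_length (by omega), List.drop_of_length_le (by omega),
      List.nil_append]
  rw [← hglue, windows_glue (by rw [List.take_append_of_le_length (by omega),
    List.take_of_length_le (by omega)]),
    windows_of_length_eq (t := t.rtake k ++ [c]) (by simp [hlen])]

theorem exists_late_window_eq {s : List α} {u : List α} (hst : s <+: t) (hu : u ∈ windows t m)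
    (hus : u ∉ windows s m) : ∃ p, s.length < p + m ∧ p + m ≤ t.length ∧ window t p m = u := by
  obtain ⟨p, hp, rfl⟩ := mem_windows.1 hu
  refine ⟨p, Nat.lt_of_not_le fun hps => hus ?_, hp, rfl⟩
  exact mem_windows.2 ⟨p, hps, (window_of_prefix hst hps).symm⟩

theorem nodup_append_windows_append_singleton {W : List (List α)} {c : α}
    (hnd : (W ++ windows t (k + 1)).Nodup)
    (hc : k ≤ t.length → t.rtake k ++ [c] ∉ W ++ windows t (k + 1)) :
    (W ++ windows (t ++ [c]) (k + 1)).Nodup := by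
  by_cases hk : k ≤ t.length
  · rw [windows_append_singleton hk, ← List.append_assoc, ← List.concat_eq_append]
    exact hnd.concat (hc hk)
  · rw [windows_eq_nil (by simp; omega), List.append_nil]
    exact (List.nodup_append.1 hnd).1

theorem mem_of_mem_glue {a : α} (h : a ∈ glue k x y) : a ∈ x ∨ a ∈ y :=
  (List.mem_append.1 h).imp_right List.mem_of_mem_drop

theorem windows_take_drop (h : q + k ≤ t.length) :
    windows t (k + 1) = windows (t.take (q + k)) (k + 1) ++ windows (t.drop q) (k + 1) := by
  rw [← windows_glue (rtake_take_add h), glue_take_drop]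

theorem windows_rotate_perm (hcl : t.take k = t.rtake k) (h : q + k ≤ t.length) :
    (windows (glue k (t.drop q) (t.take (q + k))) (k + 1)).Perm (windows t (k + 1)) := by
  rw [windows_glue (by rw [rtake_drop h, List.take_take, Nat.min_eq_left (by omega), hcl]),
    windows_take_drop h]
  exact List.perm_append_comm

theorem windows_splice_perm {d : List α} (h : q + k ≤ t.length) (hd₀ : d.take k = window t q k)
    (hd₁ : d.rtake k = window t q k) (hdk : k ≤ d.length) :
    (windows (glue k (glue k (t.take (q + k)) d) (t.drop q)) (k + 1)).Perm
      (windows t (k + 1) ++ windows d (k + 1)) := by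
  have hjoin : (t.take (q + k)).rtake k = d.take k := (rtake_take_add h).trans hd₀.symm
  rw [windows_glue (by rw [rtake_glue hjoin hdk, hd₁]; rfl), windows_glue hjoin,
    windows_take_drop h, List.append_assoc, List.append_assoc]
  exact List.perm_append_comm.append_left _

theorem exists_maximal_length {P : List α → Prop} (hx : P x) {B : ℕ}
    (hB : ∀ y, P y → y.length ≤ B) : ∃ y, P y ∧ ∀ z, P z → z.length ≤ y.length := by
  have hbdd : BddAbove (List.length '' {y | P y}) :=
    bddAbove_def.2 ⟨B, by rintro _ ⟨y, hy, rfl⟩; exact hB y hy⟩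
  obtain ⟨y, hy, hyl⟩ := Nat.sSup_mem (s := List.length '' {y | P y}) ⟨_, x, hx, rfl⟩ hbdd
  exact ⟨y, hy, fun z hz => hyl ▸ le_csSup hbdd ⟨z, hz, rfl⟩⟩

end Windows

section Counting

def binaryWords (m : ℕ) : Finset (List ℕ) :=
  (Fintype.piFinset fun _ : Fin m => Finset.range 2).image List.ofFn

theorem mem_binaryWords {u : List ℕ} {m : ℕ} :
    u ∈ binaryWords m ↔ u.length = m ∧ ∀ σ ∈ u, σ < 2 := by
  simp only [binaryWords, Finset.mem_image, Fintype.mem_piFinset, Finset.mem_range]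
  constructor
  · rintro ⟨f, hf, rfl⟩
    simpa [List.mem_ofFn] using hf
  · rintro ⟨rfl, hu⟩
    exact ⟨fun i => u[i], fun i => hu _ (List.getElem_mem _), List.ofFn_getElem⟩

theorem card_binaryWords (m : ℕ) : (binaryWords m).card = 2 ^ m := by
  rw [binaryWords, Finset.card_image_of_injective _ List.ofFn_injective, Fintype.card_piFinset]
  simp

variable {t : List ℕ} {m : ℕ}

theorem take_mem_binaryWords (hb : ∀ σ ∈ t, σ < 2) (hm : m ≤ t.length) :
    t.take m ∈ binaryWords m :=
  mem_binaryWords.2 ⟨by simp; omega, fun σ hσ => hb σ (List.mem_of_mem_take hσ)⟩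

theorem mem_binaryWords_of_mem_windows (hb : ∀ σ ∈ t, σ < 2) {u : List ℕ}
    (hu : u ∈ windows t m) : u ∈ binaryWords m := by
  obtain ⟨i, hi, rfl⟩ := mem_windows.1 hu
  exact mem_binaryWords.2 ⟨by simp [window]; omega,
    fun σ hσ => hb σ (List.mem_of_mem_drop (List.mem_of_mem_take hσ))⟩

theorem length_le_of_nodup_windows (hb : ∀ σ ∈ t, σ < 2) (hnd : (windows t m).Nodup) :
    t.length ≤ 2 ^ m + m - 1 := by
  have hcard : (windows t m).toFinset.card ≤ (binaryWords m).card :=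
    Finset.card_le_card fun u hu => mem_binaryWords_of_mem_windows hb (List.mem_toFinset.1 hu)
  rw [List.toFinset_card_of_nodup hnd, card_binaryWords, length_windows] at hcard
  have := Nat.one_le_two_pow (n := m)
  omega

theorem exists_binaryWord_not_mem_windows (h : t.length < 2 ^ m + m - 1) :
    ∃ u ∈ binaryWords m, u ∉ windows t m := by
  have hcard : (windows t m).toFinset.card < (binaryWords m).card := by
    rw [card_binaryWords]
    have := Nat.one_le_two_pow (n := m)
    exact (List.toFinset_card_le _).trans_lt (by rw [length_windows]; omega)
  obtain ⟨u, hu, hnot⟩ := Finset.exists_mem_notMem_of_card_lt_card hcard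
  exact ⟨u, hu, fun h => hnot (List.mem_toFinset.2 h)⟩

end Counting

section Connectivity

variable {n : ℕ} {s : List ℕ}

theorem eq_of_cons_append_mem_windows (hs : (windows s n).Nodup) {x : List ℕ} (hx : x.length = n)
    {a b a' b' : ℕ} (h : a :: (x ++ [b]) ∈ windows s (n + 2))
    (h' : a' :: (x ++ [b']) ∈ windows s (n + 2)) : a = a' ∧ b = b' := by
  obtain ⟨i, hi, hwi⟩ := mem_windows.1 h
  obtain ⟨j, hj, hwj⟩ := mem_windows.1 h'
  have hmid : ∀ p c d, window s p (n + 2) = c :: (x ++ [d]) → window s (p + 1) n = x := by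
    intro p c d hp
    rw [← take_window (m := n + 2 - 1) (by omega), ← drop_window, hp]
    simp [← hx]
  have hij : i = j := by
    have := nodup_windows_iff.1 hs (i + 1) (j + 1) (by omega) (by omega)
      (by rw [hmid _ _ _ hwi, hmid _ _ _ hwj])
    omega
  subst hij
  rw [hwi] at hwj
  simpa using hwj

theorem append_singleton_mem_of_cons_mem (hs : (windows s n).Nodup) {S : Set (List ℕ)}
    (hS : ∀ e ∈ binaryWords (n + 2), e ∉ windows s (n + 2) → (e.take (n + 1) ∈ S ↔ e.drop 1 ∈ S))
    {x : List ℕ} (hx : x ∈ binaryWords n) {a c : ℕ} (ha : a < 2) (hc : c < 2) (h : a :: x ∈ S) :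
    x ++ [c] ∈ S := by
  obtain ⟨hxl, hxb⟩ := mem_binaryWords.1 hx
  have edge : ∀ a' c', a' < 2 → c' < 2 → a' :: (x ++ [c']) ∉ windows s (n + 2) →
      (a' :: x ∈ S ↔ x ++ [c'] ∈ S) := by
    intro a' c' ha' hc' hunused
    have hmem : a' :: (x ++ [c']) ∈ binaryWords (n + 2) := by
      refine mem_binaryWords.2 ⟨by simp [hxl], ?_⟩
      simp only [List.mem_cons, List.mem_append, List.not_mem_nil, or_false]
      rintro σ (rfl | hσ | rfl)
      exacts [ha', hxb σ hσ, hc']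
    simpa [← hxl] using hS _ hmem hunused
  by_cases hused : a :: (x ++ [c]) ∈ windows s (n + 2)
  · -- at most one of the four edges `a' x c'` is a window of `s`, so the other three form a detour
    have only : ∀ a' c', a' :: (x ++ [c']) ∈ windows s (n + 2) → a' = a ∧ c' = c :=
      fun a' c' h' => eq_of_cons_append_mem_windows hs hxl h' hused
    have h₁ := (edge a (1 - c) ha (by omega) fun h' => by have := (only _ _ h').2; omega).1 h
    have h₂ := (edge (1 - a) (1 - c) (by omega) (by omega)
      fun h' => by have := (only _ _ h').1; omega).2 h₁
    exact (edge (1 - a) c (by omega) hc fun h' => by have := (only _ _ h').1; omega).1 h₂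
  · exact (edge a c ha hc hused).1 h

theorem mem_of_unused_edges_closed (hs : (windows s n).Nodup) {S : Set (List ℕ)}
    (hS : ∀ e ∈ binaryWords (n + 2), e ∉ windows s (n + 2) → (e.take (n + 1) ∈ S ↔ e.drop 1 ∈ S))
    {y z : List ℕ} (hy : y ∈ binaryWords (n + 1)) (hyS : y ∈ S) (hz : z ∈ binaryWords (n + 1)) :
    z ∈ S := by
  obtain ⟨hyl, hyb⟩ := mem_binaryWords.1 hy
  obtain ⟨hzl, hzb⟩ := mem_binaryWords.1 hz
  have shift : ∀ j ≤ n + 1, y.drop j ++ z.take j ∈ S := by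
    intro j hj
    induction j with
    | zero => simpa using hyS
    | succ j ih =>
      have hjy : j < y.length := by omega
      have hjz : j < z.length := by omega
      have hx : y.drop (j + 1) ++ z.take j ∈ binaryWords n := by
        refine mem_binaryWords.2 ⟨by simp; omega, fun σ hσ => ?_⟩
        rcases List.mem_append.1 hσ with hσ | hσ
        exacts [hyb σ (List.mem_of_mem_drop hσ), hzb σ (List.mem_of_mem_take hσ)]
      have := append_singleton_mem_of_cons_mem hs hS hx (hyb _ (List.getElem_mem hjy))
        (hzb _ (List.getElem_mem hjz))
        (by rw [← List.cons_append, List.cons_getElem_drop_succ]; exact ih (by omega))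
      rwa [List.append_assoc, ← List.take_succ_eq_append_getElem hjz] at this
  simpa [List.drop_of_length_le, List.take_of_length_le, hyl, hzl] using shift (n + 1) le_rfl

end Connectivity

section ClosedWalks

variable {t : List ℕ} {k : ℕ}

theorem window_pred_eq {r : ℕ} (hr : 0 < r) (h : r ≤ t.length) :
    window t (r - 1) (k + 1) = t[r - 1] :: window t r k := by
  rw [window_eq_cons (by omega), Nat.sub_add_cancel hr]

theorem getElem_pred_ne (hnd : (windows t (k + 1)).Nodup) {r r' : ℕ} (hr : 0 < r) (hr' : 0 < r')
    (h : r + k ≤ t.length) (h' : r' + k ≤ t.length) (hw : window t r k = window t r' k)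
    (hne : r ≠ r') : t[r - 1] ≠ t[r' - 1] := by
  intro heq
  have := nodup_windows_iff.1 hnd (r - 1) (r' - 1) (by omega) (by omega)
    (by rw [window_pred_eq hr (by omega), window_pred_eq hr' (by omega), heq, hw])
  omega

theorem exists_ne_of_forall_append_mem {v : List ℕ}
    (hv : ∀ c < 2, v ++ [c] ∈ windows t (k + 1)) :
    ∃ p₀ p₁, p₀ ≠ p₁ ∧ p₀ + k < t.length ∧ p₁ + k < t.length ∧
      window t p₀ k = v ∧ window t p₁ k = v := by
  have occ : ∀ c < 2, ∃ p, p + k < t.length ∧ window t p (k + 1) = v ++ [c] ∧ window t p k = v := by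
    intro c hc
    obtain ⟨p, hp, hw⟩ := mem_windows.1 (hv c hc)
    have hvk : v.length = k := by
      simpa [length_window (show p + (k + 1) ≤ t.length by omega)] using
        congrArg List.length hw.symm
    refine ⟨p, by omega, hw, ?_⟩
    rw [← take_window (Nat.le_succ k), hw, List.take_left' hvk]
  obtain ⟨p₀, h₀, hw₀, hv₀⟩ := occ 0 (by norm_num)
  obtain ⟨p₁, h₁, hw₁, hv₁⟩ := occ 1 (by norm_num)
  refine ⟨p₀, p₁, ?_, h₀, h₁, hv₀, hv₁⟩
  rintro rfl
  simp_all

theorem take_eq_rtake_of_forall_append_mem (hb : ∀ σ ∈ t, σ < 2) (hnd : (windows t (k + 1)).Nodup)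
    (hstuck : ∀ c < 2, t.rtake k ++ [c] ∈ windows t (k + 1)) : t.take k = t.rtake k := by
  obtain ⟨p₀, p₁, hne, h₀, h₁, hw₀, hw₁⟩ := exists_ne_of_forall_append_mem hstuck
  have hF : window t (t.length - k) k = t.rtake k := window_sub_eq_rtake
  by_contra hopen
  have hpos : ∀ p, window t p k = t.rtake k → 0 < p := by
    intro p hp
    exact Nat.pos_of_ne_zero fun h => hopen (by rw [← window_zero_left, ← h, hp])
  -- `t.rtake k` would then have three non-initial occurrences, with pairwise distinct predecessors
  have := getElem_pred_ne hnd (hpos _ hw₀) (hpos _ hw₁) (by omega) (by omega) (hw₀.trans hw₁.symm)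
    hne
  have := getElem_pred_ne hnd (hpos _ hw₀) (hpos _ hF) (by omega) (by omega) (hw₀.trans hF.symm)
    (by omega)
  have := getElem_pred_ne hnd (hpos _ hw₁) (hpos _ hF) (by omega) (by omega) (hw₁.trans hF.symm)
    (by omega)
  have := hb t[p₀ - 1] (List.getElem_mem _)
  have := hb t[p₁ - 1] (List.getElem_mem _)
  have := hb t[t.length - k - 1] (List.getElem_mem _)
  omega

theorem cons_mem_windows_of_forall_append_mem (hb : ∀ σ ∈ t, σ < 2)
    (hnd : (windows t (k + 1)).Nodup) (hcl : t.take k = t.rtake k) {v : List ℕ}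
    (hv : ∀ c < 2, v ++ [c] ∈ windows t (k + 1)) {a : ℕ} (ha : a < 2) :
    a :: v ∈ windows t (k + 1) := by
  obtain ⟨p₀, p₁, hne, h₀, h₁, hw₀, hw₁⟩ := exists_ne_of_forall_append_mem hv
  have hF : window t 0 k = v → window t (t.length - k) k = v := fun h =>
    window_sub_eq_rtake.trans (hcl.symm.trans h)
  obtain ⟨r, r', hr, hr', h, h', hw, hw', hrr'⟩ : ∃ r r', 0 < r ∧ 0 < r' ∧ r + k ≤ t.length ∧
      r' + k ≤ t.length ∧ window t r k = v ∧ window t r' k = v ∧ r ≠ r' := by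
    rcases Nat.eq_zero_or_pos p₀ with rfl | hp₀
    · exact ⟨p₁, t.length - k, by omega, by omega, by omega, by omega, hw₁, hF hw₀, by omega⟩
    rcases Nat.eq_zero_or_pos p₁ with rfl | hp₁
    · exact ⟨p₀, t.length - k, by omega, by omega, by omega, by omega, hw₀, hF hw₁, by omega⟩
    exact ⟨p₀, p₁, hp₀, hp₁, by omega, by omega, hw₀, hw₁, hne⟩
  have hpred := getElem_pred_ne hnd hr hr' h h' (hw.trans hw'.symm) hrr'
  have := hb t[r - 1] (List.getElem_mem _)
  have := hb t[r' - 1] (List.getElem_mem _)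
  have hmem : ∀ p (hp : 0 < p) (hpk : p + k ≤ t.length), window t p k = v →
      t[p - 1] :: v ∈ windows t (k + 1) :=
    fun p hp hpk hwp => mem_windows.2 ⟨p - 1, by omega, by rw [window_pred_eq hp (by omega), hwp]⟩
  rcases (by omega : a = t[r - 1] ∨ a = t[r' - 1]) with e | e <;> rw [e]
  exacts [hmem r hr h hw, hmem r' hr' h' hw']

end ClosedWalks

section Hierholzer

variable {t : List ℕ} {k q : ℕ}

theorem binary_glue {x y : List ℕ} (hx : ∀ σ ∈ x, σ < 2) (hy : ∀ σ ∈ y, σ < 2) :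
    ∀ σ ∈ glue k x y, σ < 2 :=
  fun σ hσ => (mem_of_mem_glue hσ).elim (hx σ) (hy σ)

structure IsDetour (k : ℕ) (t w d : List ℕ) : Prop where
  take_eq : d.take k = w
  binary : ∀ σ ∈ d, σ < 2
  nodup : (windows t (k + 1) ++ windows d (k + 1)).Nodup

theorem rtake_eq_of_isDetour (hb : ∀ σ ∈ t, σ < 2) (hcl : t.take k = t.rtake k)
    (hq : q + k ≤ t.length) {d : List ℕ} (hd : IsDetour k t (window t q k) d) (hdk : k ≤ d.length)
    (hstuck : ∀ c < 2, d.rtake k ++ [c] ∈ windows t (k + 1) ++ windows d (k + 1)) :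
    d.rtake k = window t q k := by
  -- run around `t` from position `q` back to it, then along `d`: a walk stuck at the end of `d`
  set r := glue k (t.drop q) (t.take (q + k))
  have hrk : k ≤ (t.drop q).length := by simp; omega
  have hjoin : r.rtake k = d.take k := by
    rw [rtake_glue (by rw [rtake_drop hq, List.take_take, Nat.min_eq_left (by omega), hcl])
      (by simp; omega), rtake_take_add hq, hd.take_eq]
  have hperm : (windows (glue k r d) (k + 1)).Perm (windows t (k + 1) ++ windows d (k + 1)) := by
    rw [windows_glue hjoin]
    exact (windows_rotate_perm hcl hq).append_right _
  have hend : (glue k r d).rtake k = d.rtake k := rtake_glue hjoin hdk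
  have hclosed := take_eq_rtake_of_forall_append_mem
    (binary_glue (binary_glue (fun σ h => hb σ (List.mem_of_mem_drop h))
      (fun σ h => hb σ (List.mem_of_mem_take h))) hd.binary)
    (hperm.nodup_iff.2 hd.nodup) fun c hc => hperm.mem_iff.2 (hend ▸ hstuck c hc)
  rw [← hend, ← hclosed, take_glue (by simp [length_glue]; omega), take_glue hrk]
  rfl

theorem exists_closed_detour (hb : ∀ σ ∈ t, σ < 2) (hnd : (windows t (k + 1)).Nodup)
    (hcl : t.take k = t.rtake k) (hq : q + k ≤ t.length) {c : ℕ} (hc : c < 2)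
    (hout : window t q k ++ [c] ∉ windows t (k + 1)) :
    ∃ d, IsDetour k t (window t q k) d ∧ k < d.length ∧ d.rtake k = window t q k := by
  have hwk : (window t q k).length = k := length_window hq
  have hstep : ∀ {d : List ℕ} {c : ℕ}, IsDetour k t (window t q k) d → k ≤ d.length → c < 2 →
      d.rtake k ++ [c] ∉ windows t (k + 1) ++ windows d (k + 1) →
      IsDetour k t (window t q k) (d ++ [c]) := fun hd hdk hc hnew =>
    ⟨by rw [List.take_append_of_le_length hdk, hd.take_eq],
      fun σ hσ => (List.mem_append.1 hσ).elim (hd.binary σ) (by simp_all),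
      nodup_append_windows_append_singleton hd.nodup fun _ => hnew⟩
  have hstart : IsDetour k t (window t q k) (window t q k ++ [c]) := by
    refine hstep ⟨List.take_of_length_le hwk.le, fun σ hσ => hb σ ?_, ?_⟩ hwk.ge hc ?_
    · exact List.mem_of_mem_drop (List.mem_of_mem_take hσ)
    · rwa [windows_eq_nil (t := window t q k) (by omega), List.append_nil]
    · rwa [windows_eq_nil (t := window t q k) (by omega), List.append_nil, List.rtake, hwk,
        Nat.sub_self, List.drop_zero]
  obtain ⟨d, hd, hmax⟩ := exists_maximal_length hstart fun d hd =>
    length_le_of_nodup_windows hd.binary hd.nodup.of_append_right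
  have hdk : k < d.length := by simpa [hwk] using hmax _ hstart
  have hstuck : ∀ c < 2, d.rtake k ++ [c] ∈ windows t (k + 1) ++ windows d (k + 1) := by
    intro c hc
    by_contra hnew
    simpa using hmax _ (hstep hd hdk.le hc hnew)
  exact ⟨d, hd, hdk, rtake_eq_of_isDetour hb hcl hq hd hdk.le hstuck⟩

end Hierholzer

structure Extends (n : ℕ) (s t : List ℕ) : Prop where
  isPrefix : s <+: t
  binary : ∀ σ ∈ t, σ < 2
  nodup : (windows t (n + 2)).Nodup

def verticesAfter (n : ℕ) (s t : List ℕ) : Set (List ℕ) :=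
  {y | ∃ q, s.length ≤ q + (n + 1) ∧ q + (n + 1) ≤ t.length ∧ window t q (n + 1) = y}

namespace Extends

variable {n q : ℕ} {s t : List ℕ}

theorem length_le (ht : Extends n s t) : t.length ≤ 2 ^ (n + 2) + n + 1 := by
  simpa [Nat.add_assoc] using length_le_of_nodup_windows ht.binary ht.nodup

theorem take_mem_verticesAfter_iff (ht : Extends n s t) (hcl : t.take (n + 1) = t.rtake (n + 1))
    (hout : ∀ y ∈ verticesAfter n s t, ∀ c < 2, y ++ [c] ∈ windows t (n + 2)) {e : List ℕ}
    (he : e ∈ binaryWords (n + 2)) (hes : e ∉ windows s (n + 2)) :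
    e.take (n + 1) ∈ verticesAfter n s t ↔ e.drop 1 ∈ verticesAfter n s t := by
  obtain ⟨hel, heb⟩ := mem_binaryWords.1 he
  have late := fun h => exists_late_window_eq ht.isPrefix h hes
  constructor
  · intro hy
    have he' := hout _ hy e[n + 1] (heb _ (List.getElem_mem _))
    rw [List.take_append_getElem, List.take_of_length_le hel.le] at he'
    obtain ⟨p, h₁, h₂, rfl⟩ := late he'
    exact ⟨p + 1, by omega, by omega, by rw [drop_window]; rfl⟩
  · intro hy
    have he' := cons_mem_windows_of_forall_append_mem ht.binary ht.nodup hcl (hout _ hy)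
      (heb e[0] (List.getElem_mem _))
    rw [List.cons_getElem_drop_succ, List.drop_zero] at he'
    obtain ⟨p, h₁, h₂, rfl⟩ := late he'
    exact ⟨p, by omega, by omega, by rw [take_window (by omega)]⟩

theorem exists_out_edge_not_mem (hs : (windows s n).Nodup) (ht : Extends n s t)
    (hcl : t.take (n + 1) = t.rtake (n + 1)) (hnt : n + 1 ≤ t.length)
    (hmissing : ∃ u ∈ binaryWords (n + 2), u ∉ windows t (n + 2)) :
    ∃ q c, s.length ≤ q + (n + 1) ∧ q + (n + 1) ≤ t.length ∧ c < 2 ∧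
      window t q (n + 1) ++ [c] ∉ windows t (n + 2) := by
  obtain ⟨u, hu, hut⟩ := hmissing
  obtain ⟨hul, hub⟩ := mem_binaryWords.1 hu
  by_contra! hall
  have hout : ∀ y ∈ verticesAfter n s t, ∀ c < 2, y ++ [c] ∈ windows t (n + 2) := by
    rintro _ ⟨q, h₁, h₂, rfl⟩ c hc
    exact hall q c h₁ h₂ hc
  have hst := ht.isPrefix.length_le
  obtain ⟨q, h₁, h₂, hq⟩ := mem_of_unused_edges_closed hs
    (fun e he hes => take_mem_verticesAfter_iff ht hcl hout he hes)
    (take_mem_binaryWords (fun σ h => ht.binary σ (List.mem_of_mem_drop h)) (by simp; omega))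
    ⟨s.length - (n + 1), by omega, by omega, rfl⟩ (take_mem_binaryWords hub (by omega))
  have hu' := hall q u[n + 1] h₁ h₂ (hub _ (List.getElem_mem _))
  rw [hq, List.take_append_getElem, List.take_of_length_le hul.le] at hu'
  exact hut hu'

theorem splice (ht : Extends n s t) (hsq : s.length ≤ q + (n + 1)) (hq : q + (n + 1) ≤ t.length)
    {d : List ℕ} (hd : IsDetour (n + 1) t (window t q (n + 1)) d) (hdn : n + 1 < d.length)
    (hd₁ : d.rtake (n + 1) = window t q (n + 1)) :
    Extends n s (glue (n + 1) (glue (n + 1) (t.take (q + (n + 1))) d) (t.drop q)) ∧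
      t.length < (glue (n + 1) (glue (n + 1) (t.take (q + (n + 1))) d) (t.drop q)).length := by
  refine ⟨⟨?_, ?_, ?_⟩, by simp only [length_glue, List.length_take, List.length_drop]; omega⟩
  · exact (List.prefix_take_iff.2 ⟨ht.isPrefix, hsq⟩).trans
      ((List.prefix_append _ _).trans (List.prefix_append _ _))
  · exact binary_glue (binary_glue (fun σ h => ht.binary σ (List.mem_of_mem_take h)) hd.binary)
      fun σ h => ht.binary σ (List.mem_of_mem_drop h)
  · exact (windows_splice_perm hq hd.take_eq hd₁ hdn.le).nodup_iff.2 hd.nodup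

theorem exists_longer (hs : (windows s n).Nodup) (ht : Extends n s t)
    (hlt : t.length < 2 ^ (n + 2) + n + 1) : ∃ t', Extends n s t' ∧ t.length < t'.length := by
  by_cases hext : ∃ c < 2, n + 1 ≤ t.length → t.rtake (n + 1) ++ [c] ∉ windows t (n + 2)
  · obtain ⟨c, hc, hnew⟩ := hext
    refine ⟨t ++ [c], ⟨ht.isPrefix.trans (List.prefix_append _ _), ?_, ?_⟩, by simp⟩
    · exact fun σ hσ => (List.mem_append.1 hσ).elim (ht.binary σ) (by simp_all)
    · simpa using nodup_append_windows_append_singleton (W := []) (by simpa using ht.nodup)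
        (by simpa using hnew)
  push Not at hext
  have hcl := take_eq_rtake_of_forall_append_mem ht.binary ht.nodup fun c hc => (hext c hc).2
  obtain ⟨q, c, hsq, hq, hc, hout⟩ := ht.exists_out_edge_not_mem hs hcl (hext 0 (by norm_num)).1
    (exists_binaryWord_not_mem_windows (by omega))
  obtain ⟨d, hd, hdn, hd₁⟩ := exists_closed_detour ht.binary ht.nodup hcl hq hc hout
  exact ⟨_, ht.splice hsq hq hd hdn hd₁⟩

end Extends

end DeBruijn

theorem deBruijn_binary_extend_two_general (n : ℕ)
    (s : List ℕ) (hsk : ∀ σ ∈ s, σ < 2)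
    (hs : ∀ i j, i + n ≤ s.length → j + n ≤ s.length →
      (s.drop i).take n = (s.drop j).take n → i = j) :
    ∃ t : List ℕ, t.length = 2 ^ (n + 2) + n + 1 ∧ (∀ σ ∈ t, σ < 2) ∧
      (∀ i j, i + (n + 2) ≤ t.length → j + (n + 2) ≤ t.length →
        (t.drop i).take (n + 2) = (t.drop j).take (n + 2) → i = j) ∧
      s <+: t := by
  have hsn : (DeBruijn.windows s n).Nodup := DeBruijn.nodup_windows_iff.2 hs
  have hs₀ : DeBruijn.Extends n s s :=
    ⟨List.prefix_refl s, hsk, DeBruijn.nodup_windows_of_le (by omega) hsn⟩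
  obtain ⟨t, ht, hmax⟩ := DeBruijn.exists_maximal_length hs₀ fun t ht => ht.length_le
  refine ⟨t, le_antisymm ht.length_le (not_lt.1 fun hlt => ?_), ht.binary,
    DeBruijn.nodup_windows_iff.1 ht.nodup, ht.isPrefix⟩
  obtain ⟨t', ht', hlong⟩ := ht.exists_longer hsn hlt
  exact absurd (hmax t' ht') (not_le.2 hlong)

/-- Every binary De Bruijn sequence of order `n ≥ 1` can be extended to a binary De Bruijn
sequence of order `n+2`: if `s` is a string of length `2^n + n - 1` over `{0,1}` whose
windows of length `n` are pairwise distinct, then there is a string `t` of length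
`2^(n+2) + n + 1` over `{0,1}` whose windows of length `n+2` are pairwise distinct and
which has `s` as a prefix. -/
theorem deBruijn_binary_extend_two (n : ℕ) (hn : 1 ≤ n)
    (s : List ℕ) (hslen : s.length = 2 ^ n + n - 1) (hsk : ∀ σ ∈ s, σ < 2)
    (hs : ∀ i j, i + n ≤ s.length → j + n ≤ s.length →
      (s.drop i).take n = (s.drop j).take n → i = j) :
    ∃ t : List ℕ, t.length = 2 ^ (n + 2) + n + 1 ∧ (∀ σ ∈ t, σ < 2) ∧
      (∀ i j, i + (n + 2) ≤ t.length → j + (n + 2) ≤ t.length →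
        (t.drop i).take (n + 2) = (t.drop j).take (n + 2) → i = j) ∧
      s <+: t :=
  deBruijn_binary_extend_two_general n s hsk hs
end
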